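/- For any formal contexts K1 = (G1,M1,I1) and K2 = (G2,M2,I2), there is an order isomorphism φ : ℬ(K1) ⊗ ℬ(K2) → ℬ(K1 ⊗ K2), where the left-hand ⊗ is the concept tensor of the complete lattices ℬ(K1), ℬ(K2) and the right-hand ⊗ is the direct product of contexts, which satisfies φ((A,A') ⊼ (B,B')) = (cl(A×B), (A×B)') for all concepts (A,A') ∈ ℬ(K1) and (B,B') ∈ ℬ(K2), where cl(A×B) and (A×B)' are taken in K1 ⊗ K2. -/

import Mathlib

open Set

/-- A formal context `(G, M, I)`: a set of objects, a set of attributes,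
and an incidence relation between them. -/
structure FormalContext where
  G : Type*
  M : Type*
  I : G → M → Prop

namespace FormalContext

variable (K : FormalContext)

/-- `A'` for a set of objects `A ⊆ G`. -/
def polarG (A : Set K.G) : Set K.M := upperPolar K.I A

/-- `B'` for a set of attributes `B ⊆ M`. -/
def polarM (B : Set K.M) : Set K.G := lowerPolar K.I B

/-- The closure `cl(A) = A''` of a set of objects. -/
def clG (A : Set K.G) : Set K.G := K.polarM (K.polarG A)

/-- The closure `cl(B) = B''` of a set of attributes. -/
def clM (B : Set K.M) : Set K.M := K.polarG (K.polarM B)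

/-- A set of objects is closed when it equals its closure. -/
def ClosedG (A : Set K.G) : Prop := K.clG A = A

/-- A set of attributes is closed when it equals its closure. -/
def ClosedM (B : Set K.M) : Prop := K.clM B = B

/-- The dual context `K* = (M, G, I†)`. -/
def dual : FormalContext := ⟨K.M, K.G, fun m g => K.I g m⟩

/-- The direct product `K1 ⊗ K2` of formal contexts (Ganter–Wille). -/
def dprod (K1 K2 : FormalContext) : FormalContext :=
  ⟨K1.G × K2.G, K1.M × K2.M, fun g m => K1.I g.1 m.1 ∨ K2.I g.2 m.2⟩

end FormalContext

/-- The trivial context `I = ({⋆},{⋆},≠)`. -/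
def trivCxt : FormalContext := ⟨PUnit, PUnit, fun a b => a ≠ b⟩

/-- The image `R(S)` of a set under a relation. -/
def relImage {X Y : Type*} (R : X → Y → Prop) (S : Set X) : Set Y :=
  {y | ∃ x ∈ S, R x y}

/-- `R^•(T) = {x | R(x) ⊆ T}`. -/
def relDot {X Y : Type*} (R : X → Y → Prop) (T : Set Y) : Set X :=
  {x | ∀ y, R x y → y ∈ T}

/-- `R_•(S) = {y | ∀ x ∈ S, R(x,y)}`. -/
def relLower {X Y : Type*} (R : X → Y → Prop) (S : Set X) : Set Y :=
  {y | ∀ x ∈ S, R x y}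

/-- A closed relation `K1 → K2`: each row `R(g)` is closed in `K2` and
`R^•` preserves closed sets. -/
structure IsClosedRel (K1 K2 : FormalContext) (R : K1.G → K2.G → Prop) : Prop where
  row_closed : ∀ g : K1.G, K2.ClosedG (relImage R {g})
  dot_closed : ∀ Y : Set K2.G, K2.ClosedG Y → K1.ClosedG (relDot R Y)

/-- Composition of closed relations: `(S ∘ R)(g) := cl(S(R(g)))`, closure in `K`. -/
def relComp {X Y : Type*} (K : FormalContext) (S : Y → K.G → Prop) (R : X → Y → Prop) :
    X → K.G → Prop :=
  fun g h => h ∈ K.clG (relImage S (relImage R {g}))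

/-- Composition on the attribute side: `(S ∘ R)(m) := cl(S(R(m)))`, closure on the
attribute side of `K`. -/
def relCompM {X Y : Type*} (K : FormalContext) (S : Y → K.M → Prop) (R : X → Y → Prop) :
    X → K.M → Prop :=
  fun m n => n ∈ K.clM (relImage S (relImage R {m}))

/-- The identity closed relation on `K`: `g ↦ cl({g})`. -/
def idClosedRel (K : FormalContext) : K.G → K.G → Prop := fun g h => h ∈ K.clG {g}

/-- A Chu correspondence `(R,S) : K1 → K2`. -/
structure IsChu (K1 K2 : FormalContext) (R : K1.G → K2.G → Prop) (S : K2.M → K1.M → Prop) :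
    Prop where
  extent_closed : ∀ g : K1.G, K2.ClosedG (relImage R {g})
  intent_closed : ∀ m : K2.M, K1.ClosedM (relImage S {m})
  adj : ∀ (g : K1.G) (m : K2.M),
    (∀ h ∈ relImage R {g}, K2.I h m) ↔ (∀ n ∈ relImage S {m}, K1.I g n)

/-- The intent relation `R*(m) := (R^•(m'))'` of a (closed) relation `R`. -/
def starRel (K1 K2 : FormalContext) (R : K1.G → K2.G → Prop) : K2.M → K1.M → Prop :=
  fun m n => n ∈ K1.polarG (relDot R (K2.polarM {m}))

/-- A bond from `K1` to `K2`: a relation `B ⊆ G1 × M2` with closed rows and columns. -/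
structure IsBond (K1 K2 : FormalContext) (B : K1.G → K2.M → Prop) : Prop where
  row_closed : ∀ g : K1.G, K2.ClosedM (relImage B {g})
  col_closed : ∀ m : K2.M, K1.ClosedG {g | B g m}

/-- The tensor `(R1 ⊗ R2)(g1,g2) := cl(R1(g1) × R2(g2))` of relations, closure in `K3 ⊗ K4`. -/
def tensorRelMor (K3 K4 : FormalContext) {X Y : Type*}
    (R1 : X → K3.G → Prop) (R2 : Y → K4.G → Prop) :
    X × Y → (K3.dprod K4).G → Prop :=
  fun p q => q ∈ (K3.dprod K4).clG (relImage R1 {p.1} ×ˢ relImage R2 {p.2})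

/-- The concept of `K` generated by a set of objects `A`: `(cl(A), A')`. -/
def conceptOfSet (K : FormalContext) (A : Set K.G) : Concept K.G K.M K.I where
  extent := K.clG A
  intent := K.polarG A
  upperPolar_extent := upperPolar_lowerPolar_upperPolar K.I A
  lowerPolar_intent := rfl

/-- The sup-lattice map `ℬ(R)` on concept lattices induced by a relation:
`(A,A') ↦ (cl(R(A)), R(A)')`. -/
def conceptMap (K1 K2 : FormalContext) (R : K1.G → K2.G → Prop) :
    Concept K1.G K1.M K1.I → Concept K2.G K2.M K2.I :=
  fun c => conceptOfSet K2 (relImage R c.extent)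

/-- The incidence relation of the context whose concept lattice is the concept tensor
`V1 ⊗ V2`: `(x,y) ∇ (w,z) iff x ≤ w or y ≤ z`. -/
def tensorRel (V1 V2 : Type*) [CompleteLattice V1] [CompleteLattice V2] :
    V1 × V2 → V1 × V2 → Prop :=
  fun p q => p.1 ≤ q.1 ∨ p.2 ≤ q.2

/-- The concept tensor `V1 ⊗ V2` of complete lattices (Wille's tensor product). -/
abbrev ConceptTensor (V1 V2 : Type*) [CompleteLattice V1] [CompleteLattice V2] :=
  Concept (V1 × V2) (V1 × V2) (tensorRel V1 V2)

/-- The tensorial operation `x ⊼ y`: the concept with extent `cl{(x,y)}` and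
intent `{(x,y)}'`. -/
def wedge {V1 V2 : Type*} [CompleteLattice V1] [CompleteLattice V2] (x : V1) (y : V2) :
    ConceptTensor V1 V2 where
  extent := lowerPolar (tensorRel V1 V2) (upperPolar (tensorRel V1 V2) {(x, y)})
  intent := upperPolar (tensorRel V1 V2) {(x, y)}
  upperPolar_extent := upperPolar_lowerPolar_upperPolar _ _
  lowerPolar_intent := rfl

/-- Two subsets of a complete lattice are mutually distributive: all families indexed
by a set `ι` satisfy the two distributivity laws. -/
def MutuallyDistrib {M : Type u} [CompleteLattice M] (X Y : Set M) : Prop :=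
  ∀ (ι : Type u) (x y : ι → M), (∀ i, x i ∈ X) → (∀ i, y i ∈ Y) →
    ((⨆ i, x i ⊓ y i) = ⨅ J : Set ι, ((⨆ j ∈ J, x j) ⊔ ⨆ k ∈ Jᶜ, y k)) ∧
    ((⨅ i, x i ⊔ y i) = ⨆ J : Set ι, ((⨅ j ∈ J, x j) ⊓ ⨅ k ∈ Jᶜ, y k))
section Aux
open Set

variable {α β : Type*} {r : α → β → Prop}

/-- Build a concept from any set of objects. -/
def conceptOfSet' (r : α → β → Prop) (A : Set α) : Concept α β r :=
  ⟨lowerPolar r (upperPolar r A), upperPolar r A,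
    upperPolar_lowerPolar_upperPolar r A, rfl⟩

lemma conceptOfSet'_fst (A : Set α) (hA : lowerPolar r (upperPolar r A) ⊆ A) :
    (conceptOfSet' r A).extent = A :=
  subset_antisymm hA (subset_lowerPolar_upperPolar r A)

lemma concept_fst_closed (c : Concept α β r) :
    lowerPolar r (upperPolar r c.extent) = c.extent := by
  rw [c.upperPolar_extent, c.lowerPolar_intent]

lemma cl_mono {A B : Set α} (h : A ⊆ B) :
    lowerPolar r (upperPolar r A) ⊆ lowerPolar r (upperPolar r B) :=
  lowerPolar_anti r (upperPolar_anti r h)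

lemma cl_min {A B : Set α} (h : A ⊆ B) (hB : lowerPolar r (upperPolar r B) ⊆ B) :
    lowerPolar r (upperPolar r A) ⊆ B := (cl_mono h).trans hB

end Aux

namespace ConceptTensorProof

open Set FormalContext

variable (K1 K2 : FormalContext)

local notation "V1" => Concept K1.G K1.M K1.I
local notation "V2" => Concept K2.G K2.M K2.I

lemma clG_eq (K : FormalContext) (A : Set K.G) :
    K.clG A = lowerPolar K.I (upperPolar K.I A) := rfl

lemma mem_concept_fst_iff (K : FormalContext) (c : Concept K.G K.M K.I) (g : K.G) :
    g ∈ c.extent ↔ ∀ m ∈ c.intent, K.I g m := by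
  conv_lhs => rw [← c.lowerPolar_intent]
  exact Iff.rfl

lemma gamma_le_iff (K : FormalContext) (c : Concept K.G K.M K.I) (g : K.G) :
    K.clG {g} ⊆ c.extent ↔ g ∈ c.extent := by
  constructor
  · intro h
    exact h (subset_lowerPolar_upperPolar K.I {g} rfl)
  · intro h
    rw [clG_eq]
    exact cl_min (by simpa using h) (concept_fst_closed c).subset

/-- The extent map: union of boxes. -/
def tE (𝒯 : Set (V1 × V2)) : Set (K1.dprod K2).G :=
  {g | ∃ p ∈ 𝒯, g.1 ∈ p.1.extent ∧ g.2 ∈ p.2.extent}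

/-- The inverse map on extents. -/
def tD (T : Set (K1.dprod K2).G) : Set (V1 × V2) :=
  {p | p.1.extent ×ˢ p.2.extent ⊆ T}

lemma tE_mono {𝒯 𝒰 : Set (V1 × V2)} (h : 𝒯 ⊆ 𝒰) : tE K1 K2 𝒯 ⊆ tE K1 K2 𝒰 :=
  fun _ ⟨p, hp, hg⟩ => ⟨p, h hp, hg⟩

lemma tD_mono {T U : Set (K1.dprod K2).G} (h : T ⊆ U) : tD K1 K2 T ⊆ tD K1 K2 U :=
  fun _ hp => hp.trans h

/-- Closed sets of the product are saturated under coordinatewise closure. -/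
lemma saturated {T : Set (K1.dprod K2).G}
    (hT : lowerPolar (K1.dprod K2).I (upperPolar (K1.dprod K2).I T) ⊆ T)
    {g1 : K1.G} {g2 : K2.G} (hg : (g1, g2) ∈ T)
    {h1 : K1.G} {h2 : K2.G} (h1c : h1 ∈ K1.clG {g1}) (h2c : h2 ∈ K2.clG {g2}) :
    (h1, h2) ∈ T := by
  apply hT
  intro m hm
  rcases hm hg with h | h
  · exact Or.inl (h1c (fun a ha => by rw [Set.mem_singleton_iff] at ha; subst ha; exact h))
  · exact Or.inr (h2c (fun a ha => by rw [Set.mem_singleton_iff] at ha; subst ha; exact h))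

/-- `tE` of a tensor-closed set is product-closed. -/
lemma tE_closed {𝒯 : Set (V1 × V2)}
    (h𝒯 : lowerPolar (tensorRel V1 V2) (upperPolar (tensorRel V1 V2) 𝒯) ⊆ 𝒯) :
    lowerPolar (K1.dprod K2).I (upperPolar (K1.dprod K2).I (tE K1 K2 𝒯)) ⊆
      tE K1 K2 𝒯 := by
  rintro ⟨g1, g2⟩ hg
  set c : V1 := conceptOfSet' K1.I {g1} with hc
  set d : V2 := conceptOfSet' K2.I {g2} with hd
  have hcd : (c, d) ∈ 𝒯 := by
    apply h𝒯
    intro w hw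
    by_contra hcon
    rw [tensorRel] at hcon
    push_neg at hcon
    obtain ⟨hcw, hdw⟩ := hcon
    rw [← Concept.extent_subset_extent_iff] at hcw hdw
    have hg1 : g1 ∉ w.1.extent := fun h => hcw ((gamma_le_iff K1 w.1 g1).2 h)
    have hg2 : g2 ∉ w.2.extent := fun h => hdw ((gamma_le_iff K2 w.2 g2).2 h)
    rw [mem_concept_fst_iff] at hg1 hg2
    push_neg at hg1 hg2
    obtain ⟨m1, hm1, hgm1⟩ := hg1
    obtain ⟨m2, hm2, hgm2⟩ := hg2
    have hmem : (m1, m2) ∈ upperPolar (K1.dprod K2).I (tE K1 K2 𝒯) := by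
      rintro ⟨h1, h2⟩ ⟨p, hp, hh1, hh2⟩
      rcases hw hp with h | h
      · exact Or.inl ((mem_concept_fst_iff K1 w.1 h1).1 (h hh1) m1 hm1)
      · exact Or.inr ((mem_concept_fst_iff K2 w.2 h2).1 (h hh2) m2 hm2)
    rcases hg hmem with h | h
    · exact hgm1 h
    · exact hgm2 h
  refine ⟨(c, d), hcd, ?_, ?_⟩
  · exact subset_lowerPolar_upperPolar K1.I {g1} rfl
  · exact subset_lowerPolar_upperPolar K2.I {g2} rfl

/-- `tD` of a product-closed set is tensor-closed. -/
lemma tD_closed {T : Set (K1.dprod K2).G}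
    (hT : lowerPolar (K1.dprod K2).I (upperPolar (K1.dprod K2).I T) ⊆ T) :
    lowerPolar (tensorRel V1 V2) (upperPolar (tensorRel V1 V2) (tD K1 K2 T)) ⊆
      tD K1 K2 T := by
  rintro ⟨c, d⟩ hcd
  rintro ⟨g1, g2⟩ ⟨hg1, hg2⟩
  apply hT
  rintro ⟨m1, m2⟩ hm
  set w : V1 := conceptOfSet' K1.I (lowerPolar K1.I {m1}) with hw
  set z : V2 := conceptOfSet' K2.I (lowerPolar K2.I {m2}) with hz
  have hwfst : w.extent = lowerPolar K1.I {m1} := by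
    apply conceptOfSet'_fst
    intro h hh
    intro b hb
    rw [Set.mem_singleton_iff] at hb; subst hb
    exact hh (fun a ha => ha rfl)
  have hzfst : z.extent = lowerPolar K2.I {m2} := by
    apply conceptOfSet'_fst
    intro h hh
    intro b hb
    rw [Set.mem_singleton_iff] at hb; subst hb
    exact hh (fun a ha => ha rfl)
  have hwz : (w, z) ∈ upperPolar (tensorRel V1 V2) (tD K1 K2 T) := by
    rintro ⟨x, y⟩ hxy
    by_contra hcon
    rw [tensorRel] at hcon
    push_neg at hcon
    obtain ⟨hxw, hyz⟩ := hcon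
    rw [← Concept.extent_subset_extent_iff] at hxw hyz
    rw [hwfst] at hxw; rw [hzfst] at hyz
    rw [Set.not_subset] at hxw hyz
    obtain ⟨h1, hh1, hh1'⟩ := hxw
    obtain ⟨h2, hh2, hh2'⟩ := hyz
    rcases hm (hxy (Set.mk_mem_prod hh1 hh2)) with h | h
    · exact hh1' (fun b hb => by rw [Set.mem_singleton_iff] at hb; subst hb; exact h)
    · exact hh2' (fun b hb => by rw [Set.mem_singleton_iff] at hb; subst hb; exact h)
  rcases hcd hwz with h | h
  · rw [← Concept.extent_subset_extent_iff, hwfst] at h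
    exact Or.inl (h hg1 rfl)
  · rw [← Concept.extent_subset_extent_iff, hzfst] at h
    exact Or.inr (h hg2 rfl)

lemma tE_tD {T : Set (K1.dprod K2).G}
    (hT : lowerPolar (K1.dprod K2).I (upperPolar (K1.dprod K2).I T) ⊆ T) :
    tE K1 K2 (tD K1 K2 T) = T := by
  apply subset_antisymm
  · rintro g ⟨p, hp, hg1, hg2⟩
    exact hp ⟨hg1, hg2⟩
  · rintro ⟨g1, g2⟩ hg
    refine ⟨(conceptOfSet' K1.I {g1}, conceptOfSet' K2.I {g2}), ?_, ?_, ?_⟩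
    · rintro ⟨h1, h2⟩ ⟨hh1, hh2⟩
      exact saturated K1 K2 hT hg hh1 hh2
    · exact subset_lowerPolar_upperPolar K1.I {g1} rfl
    · exact subset_lowerPolar_upperPolar K2.I {g2} rfl

lemma tD_tE {𝒯 : Set (V1 × V2)}
    (h𝒯 : lowerPolar (tensorRel V1 V2) (upperPolar (tensorRel V1 V2) 𝒯) ⊆ 𝒯) :
    tD K1 K2 (tE K1 K2 𝒯) = 𝒯 := by
  apply subset_antisymm
  · rintro ⟨c, d⟩ hcd
    apply h𝒯
    intro w hw
    by_contra hcon
    rw [tensorRel] at hcon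
    push_neg at hcon
    obtain ⟨hcw, hdw⟩ := hcon
    rw [← Concept.extent_subset_extent_iff, Set.not_subset] at hcw hdw
    obtain ⟨g1, hg1, hg1'⟩ := hcw
    obtain ⟨g2, hg2, hg2'⟩ := hdw
    obtain ⟨p, hp, hpg1, hpg2⟩ := hcd (Set.mk_mem_prod hg1 hg2)
    rcases hw hp with h | h
    · exact hg1' (Concept.extent_subset_extent_iff.2 h hpg1)
    · exact hg2' (Concept.extent_subset_extent_iff.2 h hpg2)
  · intro p hp
    rintro ⟨g1, g2⟩ ⟨hg1, hg2⟩
    exact ⟨p, hp, hg1, hg2⟩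

end ConceptTensorProof

/-- There is an order isomorphism
`φ : ℬ(K1) ⊗ ℬ(K2) ≅ ℬ(K1 ⊗ K2)` with
`φ((A,A') ⊼ (B,B')) = (cl(A×B), (A×B)')`. -/
theorem conceptTensor_iso_dprod (K1 K2 : FormalContext) :
    ∃ φ : ConceptTensor (Concept K1.G K1.M K1.I) (Concept K2.G K2.M K2.I) ≃o
          Concept (K1.dprod K2).G (K1.dprod K2).M (K1.dprod K2).I,
      ∀ (c : Concept K1.G K1.M K1.I) (d : Concept K2.G K2.M K2.I),
        (φ (wedge c d)).extent = (K1.dprod K2).clG (c.extent ×ˢ d.extent) ∧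
        (φ (wedge c d)).intent = (K1.dprod K2).polarG (c.extent ×ˢ d.extent) := by
  classical
  open ConceptTensorProof in
  set V1 := Concept K1.G K1.M K1.I with hV1
  set V2 := Concept K2.G K2.M K2.I with hV2
  let f : ConceptTensor V1 V2 → Concept (K1.dprod K2).G (K1.dprod K2).M (K1.dprod K2).I :=
    fun 𝒞 => conceptOfSet' (K1.dprod K2).I (tE K1 K2 𝒞.extent)
  let g : Concept (K1.dprod K2).G (K1.dprod K2).M (K1.dprod K2).I → ConceptTensor V1 V2 :=
    fun T => conceptOfSet' (tensorRel V1 V2) (tD K1 K2 T.extent)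
  have hf_fst : ∀ 𝒞, (f 𝒞).extent = tE K1 K2 𝒞.extent := fun 𝒞 =>
    conceptOfSet'_fst _ (tE_closed K1 K2 (concept_fst_closed 𝒞).subset)
  have hg_fst : ∀ T, (g T).extent = tD K1 K2 T.extent := fun T =>
    conceptOfSet'_fst _ (tD_closed K1 K2 (concept_fst_closed T).subset)
  refine ⟨⟨⟨f, g, ?_, ?_⟩, ?_⟩, ?_⟩
  · intro 𝒞
    apply Concept.ext
    rw [hg_fst, hf_fst, tD_tE K1 K2 (concept_fst_closed 𝒞).subset]
  · intro T
    apply Concept.ext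
    rw [hf_fst, hg_fst, tE_tD K1 K2 (concept_fst_closed T).subset]
  · intro 𝒞 𝒟
    constructor
    · intro h
      rw [← Concept.extent_subset_extent_iff] at h ⊢
      replace h : (f 𝒞).extent ⊆ (f 𝒟).extent := h
      rw [hf_fst, hf_fst] at h
      have := tD_mono K1 K2 h
      rwa [tD_tE K1 K2 (concept_fst_closed 𝒞).subset,
        tD_tE K1 K2 (concept_fst_closed 𝒟).subset] at this
    · intro h
      rw [← Concept.extent_subset_extent_iff] at h ⊢
      show (f 𝒞).extent ⊆ (f 𝒟).extent
      rw [hf_fst, hf_fst]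
      exact tE_mono K1 K2 h
  · intro c d
    have hwfst : (wedge c d).extent =
        lowerPolar (tensorRel V1 V2) (upperPolar (tensorRel V1 V2) {(c, d)}) := rfl
    have hXT : c.extent ×ˢ d.extent ⊆ (K1.dprod K2).clG (c.extent ×ˢ d.extent) :=
      subset_lowerPolar_upperPolar _ _
    have hTclosed : lowerPolar (K1.dprod K2).I
        (upperPolar (K1.dprod K2).I ((K1.dprod K2).clG (c.extent ×ˢ d.extent))) ⊆
        (K1.dprod K2).clG (c.extent ×ˢ d.extent) := by
      exact (congrArg (lowerPolar (K1.dprod K2).I)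
        (upperPolar_lowerPolar_upperPolar (K1.dprod K2).I (c.extent ×ˢ d.extent))).subset
    have hwclosed : lowerPolar (tensorRel V1 V2) (upperPolar (tensorRel V1 V2)
        (wedge c d).extent) ⊆ (wedge c d).extent := (concept_fst_closed (wedge c d)).subset
    have hext : tE K1 K2 (wedge c d).extent = (K1.dprod K2).clG (c.extent ×ˢ d.extent) := by
      apply subset_antisymm
      · -- wedge extent ⊆ tD (clG X), then tE mono and tE_tD
        have hsub : (wedge c d).extent ⊆ tD K1 K2 ((K1.dprod K2).clG (c.extent ×ˢ d.extent)) := by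
          rw [hwfst]
          apply cl_min _ (tD_closed K1 K2 hTclosed)
          intro p hp
          rw [Set.mem_singleton_iff] at hp; subst hp
          exact hXT
        have := tE_mono K1 K2 hsub
        rwa [tE_tD K1 K2 hTclosed] at this
      · apply cl_min _ (tE_closed K1 K2 hwclosed)
        rintro ⟨g1, g2⟩ ⟨hg1, hg2⟩
        exact ⟨(c, d), subset_lowerPolar_upperPolar _ _ rfl, hg1, hg2⟩
    refine ⟨?_, ?_⟩
    · show (f (wedge c d)).extent = _
      rw [hf_fst, hext]
    · show (f (wedge c d)).intent = _
      have hsnd : (f (wedge c d)).intent =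
          upperPolar (K1.dprod K2).I (tE K1 K2 (wedge c d).extent) := rfl
      rw [hsnd, hext]
      exact upperPolar_lowerPolar_upperPolar (K1.dprod K2).I (c.extent ×ˢ d.extent)
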